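/- For the pp-wave metric ds² = dx² + dy² + 2 du dv − 2 e^{2ρx} du² on ℝ⁴ (ρ a nonzero constant), the vector fields y∂_y, u∂_v, and u∂_y all satisfy the affine symmetry condition L_Y Γ^γ_{αβ} = 0. -/

import Mathlib

open scoped BigOperators

noncomputable section

variable {ι : Type*}

/-- Partial derivative of `f` in the `i`-th coordinate direction at `x`. -/
def pd [Fintype ι] [DecidableEq ι] (f : (ι → ℝ) → ℝ) (i : ι) (x : ι → ℝ) : ℝ :=
  fderiv ℝ f x (Pi.single i 1)

/-- Christoffel symbols `Γ^a_{bc}` of the metric `g` with inverse `ginv`. -/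
def Γ [Fintype ι] [DecidableEq ι] (ginv g : (ι → ℝ) → ι → ι → ℝ) (a b c : ι)
    (x : ι → ℝ) : ℝ :=
  (1/2) * ∑ d, ginv x a d *
    (pd (fun y => g y d c) b x + pd (fun y => g y d b) c x - pd (fun y => g y b c) d x)

/-- Velocity components of a curve. -/
def vel (u : ℝ → ι → ℝ) (a : ι) (s : ℝ) : ℝ := deriv (fun t => u t a) s

/-- The affinely parametrized geodesic equation `ü^a + Γ^a_{bc}(u) u̇^b u̇^c = 0`. -/
def IsGeodesic [Fintype ι] [DecidableEq ι] (ginv g : (ι → ℝ) → ι → ι → ℝ)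
    (u : ℝ → ι → ℝ) : Prop :=
  ∀ s a, deriv (vel u a) s + ∑ b, ∑ c, Γ ginv g a b c (u s) * vel u b s * vel u c s = 0

/-- Components of the Lie derivative of the metric,
`(L_Y g)_{ab} = Y^c ∂_c g_{ab} + g_{cb} ∂_a Y^c + g_{ac} ∂_b Y^c`. -/
def LieG [Fintype ι] [DecidableEq ι] (g : (ι → ℝ) → ι → ι → ℝ) (Y : (ι → ℝ) → ι → ℝ)
    (x : ι → ℝ) (a b : ι) : ℝ :=
  (∑ c, Y x c * pd (fun y => g y a b) c x) + (∑ c, g x c b * pd (fun y => Y y c) a x) +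
    (∑ c, g x a c * pd (fun y => Y y c) b x)

/-- Components of the Lie derivative of the Christoffel symbols along `Y`:
`(L_Y Γ)^c_{ab} = Y^d ∂_d Γ^c_{ab} − Γ^d_{ab} ∂_d Y^c + Γ^c_{db} ∂_a Y^d
  + Γ^c_{ad} ∂_b Y^d + ∂_a ∂_b Y^c`. -/
def LieΓ [Fintype ι] [DecidableEq ι] (ginv g : (ι → ℝ) → ι → ι → ℝ)
    (Y : (ι → ℝ) → ι → ℝ) (c a b : ι) (x : ι → ℝ) : ℝ :=
  (∑ d, Y x d * pd (Γ ginv g c a b) d x) - (∑ d, Γ ginv g d a b x * pd (fun y => Y y c) d x)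
    + (∑ d, Γ ginv g c d b x * pd (fun y => Y y d) a x)
    + (∑ d, Γ ginv g c a d x * pd (fun y => Y y d) b x)
    + pd (fun y => pd (fun z => Y z c) b y) a x

/-- Covariant derivative of a vector field, `∇_b Y^c`. -/
def covD [Fintype ι] [DecidableEq ι] (ginv g : (ι → ℝ) → ι → ι → ℝ)
    (Y : (ι → ℝ) → ι → ℝ) (b c : ι) (x : ι → ℝ) : ℝ :=
  pd (fun y => Y y c) b x + ∑ d, Γ ginv g c b d x * Y x d

/-- Second covariant derivative of a vector field, `∇_a ∇_b Y^c`. -/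
def covD2 [Fintype ι] [DecidableEq ι] (ginv g : (ι → ℝ) → ι → ι → ℝ)
    (Y : (ι → ℝ) → ι → ℝ) (a b c : ι) (x : ι → ℝ) : ℝ :=
  pd (covD ginv g Y b c) a x + (∑ d, Γ ginv g c a d x * covD ginv g Y b d x)
    - ∑ d, Γ ginv g d a b x * covD ginv g Y d c x

/-- Riemann curvature `R^c{}_{bad}` defined from the Christoffel symbols in the usual way,
so that `∇_a ∇_b Y^c = R^c{}_{bad} Y^d` is the affine-vector-field equation. -/
def Riem [Fintype ι] [DecidableEq ι] (ginv g : (ι → ℝ) → ι → ι → ℝ) (c b a d : ι)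
    (x : ι → ℝ) : ℝ :=
  pd (Γ ginv g c d b) a x - pd (Γ ginv g c a b) d x
    + ∑ e, (Γ ginv g c a e x * Γ ginv g e d b x - Γ ginv g c d e x * Γ ginv g e a b x)

/-- The pp-wave metric `ds² = dx² + dy² + 2 du dv − 2 e^{2ρx} du²` on `ℝ⁴`, with
coordinates `(u,v,x,y) = (0,1,2,3)`. -/
def ppg (ρ : ℝ) (x : Fin 4 → ℝ) (a b : Fin 4) : ℝ :=
  if a = 0 ∧ b = 0 then -2 * Real.exp (2 * ρ * x 2)
  else if (a = 0 ∧ b = 1) ∨ (a = 1 ∧ b = 0) then 1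
  else if (a = 2 ∧ b = 2) ∨ (a = 3 ∧ b = 3) then 1
  else 0

/-!
All three fields are of the form `y^j ∂_m` with constant Jacobian, so
`(L_Y Γ)^c_{ab} = y^j ∂_m Γ^c_{ab} - δ^c_m Γ^j_{ab} + δ^j_a Γ^c_{mb} + δ^j_b Γ^c_{am}`.
For the pp-wave the only nonzero Christoffel symbols are `Γ^x_{uu} = 2ρ e^{2ρx}` and
`Γ^v_{ux} = Γ^v_{xu} = -2ρ e^{2ρx}`: they depend on `x` alone, carry an upper index `v` or `x`
and lower indices `u` or `x`. For `(j, m) = (y, y), (u, v), (u, y)` every term therefore vanishes.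
-/

section CoordinateDerivatives

variable {ι : Type*} [Fintype ι] [DecidableEq ι]

lemma pd_const (k : ℝ) (i : ι) (x : ι → ℝ) : pd (fun _ => k) i x = 0 := by
  simp [pd]

lemma pd_apply (j i : ι) (x : ι → ℝ) : pd (fun y => y j) i x = if j = i then 1 else 0 := by
  rw [pd, (hasFDerivAt_apply j x).fderiv]
  simp [Pi.single_apply]

lemma pd_const_mul_exp (c k : ℝ) (j i : ι) (x : ι → ℝ) :
    pd (fun y => c * Real.exp (k * y j)) i x
      = if j = i then c * (k * Real.exp (k * x j)) else 0 := by
  have h := (((hasFDerivAt_apply j x).const_mul k).exp).const_mul c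
  rw [pd, h.fderiv]
  by_cases hji : j = i
  · subst hji
    simp only [smul_apply, ContinuousLinearMap.proj_apply, Pi.single_eq_same,
      smul_eq_mul, if_true]
    ring
  · simp [hji]

lemma pd_linearField (j m k a : ι) (x : ι → ℝ) :
    pd (fun y => if k = m then y j else 0) a x = if k = m ∧ j = a then 1 else 0 := by
  by_cases hk : k = m <;> simp [hk, pd_apply, pd_const]

end CoordinateDerivatives

section LinearFields

variable {ι : Type*} [Fintype ι] [DecidableEq ι] (ginv g : (ι → ℝ) → ι → ι → ℝ)

lemma lieΓ_linearField (j m c a b : ι) (x : ι → ℝ) :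
    LieΓ ginv g (fun y k => if k = m then y j else 0) c a b x
      = x j * pd (Γ ginv g c a b) m x - (if c = m then Γ ginv g j a b x else 0)
        + (if j = a then Γ ginv g c m b x else 0) + (if j = b then Γ ginv g c a m x else 0) := by
  simp only [LieΓ, pd_linearField, pd_const]
  simp [Finset.sum_ite_eq', ite_and]

lemma lieΓ_linearField_eq_zero {j m : ι} {x : ι → ℝ}
    (hm : ∀ c a b, pd (Γ ginv g c a b) m x = 0) (hj : ∀ a b, Γ ginv g j a b x = 0)
    (hl : ∀ c b, Γ ginv g c m b x = 0) (hr : ∀ c a, Γ ginv g c a m x = 0) (c a b : ι) :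
    LieΓ ginv g (fun y k => if k = m then y j else 0) c a b x = 0 := by
  simp [lieΓ_linearField, hm, hj, hl, hr]

end LinearFields

section PPWave

def ppgInv (ρ : ℝ) (x : Fin 4 → ℝ) (a b : Fin 4) : ℝ :=
  if (a = 0 ∧ b = 1) ∨ (a = 1 ∧ b = 0) then 1
  else if a = 1 ∧ b = 1 then 2 * Real.exp (2 * ρ * x 2)
  else if (a = 2 ∧ b = 2) ∨ (a = 3 ∧ b = 3) then 1
  else 0

def ppgChristoffel (ρ : ℝ) (c a b : Fin 4) : ℝ :=
  if c = 2 ∧ a = 0 ∧ b = 0 then 2 * ρ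
  else if c = 1 ∧ ((a = 0 ∧ b = 2) ∨ (a = 2 ∧ b = 0)) then -2 * ρ
  else 0

variable {ρ : ℝ}

lemma ppgInv_mul_ppg (x : Fin 4 → ℝ) : Matrix.of (ppgInv ρ x) * Matrix.of (ppg ρ x) = 1 := by
  ext a b
  fin_cases a <;> fin_cases b <;> simp [Matrix.mul_apply, Fin.sum_univ_four, ppgInv, ppg]

lemma ginv_eq_ppgInv {ginv : (Fin 4 → ℝ) → Fin 4 → Fin 4 → ℝ}
    (hinv : ∀ x a b, (∑ c, ppg ρ x a c * ginv x c b) = if a = b then (1:ℝ) else 0) :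
    ginv = ppgInv ρ := by
  funext x
  have hright : Matrix.of (ppg ρ x) * Matrix.of (ginv x) = 1 := by
    ext a b
    simpa [Matrix.mul_apply, Matrix.one_apply] using hinv x a b
  exact congrArg Matrix.of.symm (left_inv_eq_right_inv (ppgInv_mul_ppg x) hright).symm

lemma pd_ppg (d c b : Fin 4) (x : Fin 4 → ℝ) :
    pd (fun y => ppg ρ y d c) b x
      = if d = 0 ∧ c = 0 ∧ b = 2 then -4 * ρ * Real.exp (2 * ρ * x 2) else 0 := by
  by_cases h : d = 0 ∧ c = 0
  · obtain ⟨rfl, rfl⟩ := h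
    have e : (fun y => ppg ρ y 0 0) = fun y => (-2:ℝ) * Real.exp (2 * ρ * y 2) := by
      funext y; simp [ppg]
    rw [e, pd_const_mul_exp]
    by_cases hb : b = 2
    · subst hb
      simp only [if_true, and_self]
      ring
    · simp [hb, Ne.symm hb]
  · have e : (fun y => ppg ρ y d c) = fun _ => ppg ρ x d c := by
      funext y; simp only [ppg, if_neg h]
    rw [e, pd_const]
    simp [← and_assoc, h]

lemma Γ_ppgInv (c a b : Fin 4) :
    Γ (ppgInv ρ) (ppg ρ) c a b = fun x => ppgChristoffel ρ c a b * Real.exp (2 * ρ * x 2) := by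
  funext x
  simp only [Γ, pd_ppg, Fin.sum_univ_four]
  fin_cases c <;> fin_cases a <;> fin_cases b <;> simp [ppgInv, ppgChristoffel] <;> ring

lemma Γ_ppgInv_eq_zero {c a b : Fin 4} (h : ppgChristoffel ρ c a b = 0) (x : Fin 4 → ℝ) :
    Γ (ppgInv ρ) (ppg ρ) c a b x = 0 := by
  simp [Γ_ppgInv, h]

lemma pd_Γ_ppgInv_eq_zero {m : Fin 4} (hm : m ≠ 2) (c a b : Fin 4) (x : Fin 4 → ℝ) :
    pd (Γ (ppgInv ρ) (ppg ρ) c a b) m x = 0 := by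
  simp [Γ_ppgInv, pd_const_mul_exp, Ne.symm hm]

end PPWave

theorem radiation_pp_wave_affine_fields_general (ρ : ℝ)
    (ginv : (Fin 4 → ℝ) → Fin 4 → Fin 4 → ℝ)
    (hinv : ∀ x a b, (∑ c, ppg ρ x a c * ginv x c b) = if a = b then (1:ℝ) else 0) :
    (∀ (x : Fin 4 → ℝ) (c a b : Fin 4),
        LieΓ ginv (ppg ρ) (fun y k => if k = 3 then y 3 else 0) c a b x = 0) ∧
    (∀ (x : Fin 4 → ℝ) (c a b : Fin 4),
        LieΓ ginv (ppg ρ) (fun y k => if k = 1 then y 0 else 0) c a b x = 0) ∧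
    (∀ (x : Fin 4 → ℝ) (c a b : Fin 4),
        LieΓ ginv (ppg ρ) (fun y k => if k = 3 then y 0 else 0) c a b x = 0) := by
  obtain rfl := ginv_eq_ppgInv hinv
  refine ⟨fun x => ?_, fun x => ?_, fun x => ?_⟩ <;>
    exact lieΓ_linearField_eq_zero _ _ (pd_Γ_ppgInv_eq_zero (by decide) · · · x)
      (fun _ _ => Γ_ppgInv_eq_zero (by simp [ppgChristoffel]) x)
      (fun _ _ => Γ_ppgInv_eq_zero (by simp [ppgChristoffel]) x)
      (fun _ _ => Γ_ppgInv_eq_zero (by simp [ppgChristoffel]) x)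

/-- for the pure-radiation pp-wave metric
`ds² = dx² + dy² + 2 du dv − 2 e^{2ρx} du²` (`ρ ≠ 0`), the vector fields `y∂_y`, `u∂_v`
and `u∂_y` all satisfy the affine symmetry condition `L_Y Γ = 0`. -/
theorem radiation_pp_wave_affine_fields (ρ : ℝ) (hρ : ρ ≠ 0)
    (ginv : (Fin 4 → ℝ) → Fin 4 → Fin 4 → ℝ)
    (hinv : ∀ x a b, (∑ c, ppg ρ x a c * ginv x c b) = if a = b then (1:ℝ) else 0) :
    (∀ (x : Fin 4 → ℝ) (c a b : Fin 4),
        LieΓ ginv (ppg ρ) (fun y k => if k = 3 then y 3 else 0) c a b x = 0) ∧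
    (∀ (x : Fin 4 → ℝ) (c a b : Fin 4),
        LieΓ ginv (ppg ρ) (fun y k => if k = 1 then y 0 else 0) c a b x = 0) ∧
    (∀ (x : Fin 4 → ℝ) (c a b : Fin 4),
        LieΓ ginv (ppg ρ) (fun y k => if k = 3 then y 0 else 0) c a b x = 0) :=
  radiation_pp_wave_affine_fields_general ρ ginv hinv
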